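/- arXiv:math/0310021 — 4 statements merged into one kernel-verified Lean document; each statement's English description precedes it below -/
import Mathlib

section
/- Let B > 0, ζ > 0, and let z ∈ ℂ satisfy −B < Re z < B. Set a = 1/2 − z/(2B) (so 0 < Re a < 1). Then the integral ∫₀^∞ (B / sinh(Bt)) · exp(−(ζ/2)·coth(Bt) + t z) dt converges absolutely and equals e^{−ζ/2} · ∫₀^∞ e^{−ζτ} τ^{a−1} (1+τ)^{−a} dτ, where the complex powers are defined via the real logarithm of τ > 0 and of 1+τ > 0. -/
open MeasureTheory Set

/-!
The substitution `τ = (coth (B t) - 1) / 2 = 1 / (e^{2Bt} - 1)` is a decreasing bijection of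
`(0, ∞)` with `|dτ/dt| = 2B e^{2Bt} τ²` and `1 + 1/τ = e^{2Bt}`. Under it
`-(ζ/2) coth (B t) = -ζ/2 - ζτ`, and `τ^{a-1} (1+τ)^{-a} = τ⁻¹ e^{-2aBt}` with `2aB = B - z`,
so the Jacobian times the Tricomi integrand at `τ` is exactly the `t`-integrand divided by
`e^{-ζ/2}`. Absolute convergence is transported back from the `τ`-side, where the integrand
is dominated by `τ^{Re a - 1} e^{-ζτ}` since `Re a > 0`.
-/

noncomputable section

/-- The substitution `τ = (coth (B t) - 1) / 2`. -/
def cothSubst (B t : ℝ) : ℝ := (Real.exp (2 * B * t) - 1)⁻¹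

def cothSubstDeriv (B t : ℝ) : ℝ := -(2 * B * Real.exp (2 * B * t) * cothSubst B t ^ 2)

def tricomiIntegrand (ζ : ℝ) (a : ℂ) (τ : ℝ) : ℂ :=
  Complex.exp (-(ζ : ℂ) * τ) * Complex.exp ((a - 1) * Real.log τ) *
    Complex.exp (-a * Real.log (1 + τ))

def heatKernelLaplaceIntegrand (B ζ : ℝ) (z : ℂ) (t : ℝ) : ℂ :=
  ((B / Real.sinh (B * t) : ℝ) : ℂ) *
    Complex.exp (((-(ζ / 2) * (Real.cosh (B * t) / Real.sinh (B * t)) : ℝ) : ℂ) + t * z)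

end

section CothSubst

variable {B : ℝ}

lemma exp_two_mul_mul_eq_sq (B t : ℝ) : Real.exp (2 * B * t) = Real.exp (B * t) ^ 2 := by
  rw [← Real.exp_nat_mul]; ring_nf

lemma exp_two_mul_ne_one {t : ℝ} (hBt : B * t ≠ 0) : Real.exp (2 * B * t) ≠ 1 := by
  rw [Ne, Real.exp_eq_one_iff, mul_assoc]
  exact mul_ne_zero two_ne_zero hBt

lemma cothSubst_pos (hB : 0 < B) {t : ℝ} (ht : 0 < t) : 0 < cothSubst B t :=
  inv_pos.mpr (sub_pos.mpr (Real.one_lt_exp_iff.mpr (by positivity)))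

lemma cothSubst_injective (hB : B ≠ 0) : Function.Injective (cothSubst B) := fun _ _ h =>
  mul_left_cancel₀ (mul_ne_zero two_ne_zero hB)
    (Real.exp_injective (sub_left_injective (inv_injective h)))

lemma log_one_add_inv_cothSubst (B t : ℝ) : Real.log (1 + (cothSubst B t)⁻¹) = 2 * B * t := by
  rw [cothSubst, inv_inv, add_sub_cancel, Real.log_exp]

lemma cothSubst_image_Ioi (hB : 0 < B) : cothSubst B '' Ioi 0 = Ioi 0 := by
  refine Subset.antisymm (image_subset_iff.mpr fun t ht => cothSubst_pos hB ht) fun τ hτ => ?_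
  have hτ : 0 < τ := hτ
  refine ⟨Real.log (1 + τ⁻¹) / (2 * B), ?_, ?_⟩
  · exact div_pos (Real.log_pos (by simpa using hτ)) (by positivity)
  · rw [cothSubst, mul_div_cancel₀ _ (by positivity), Real.exp_log (by positivity),
      add_sub_cancel_left, inv_inv]

lemma hasDerivAt_cothSubst {t : ℝ} (hBt : B * t ≠ 0) :
    HasDerivAt (cothSubst B) (cothSubstDeriv B t) t := by
  have hE : HasDerivAt (fun s => Real.exp (2 * B * s) - 1) (Real.exp (2 * B * t) * (2 * B)) t :=
    (((hasDerivAt_id' t).const_mul (2 * B)).exp.sub_const 1).congr_deriv (by ring)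
  exact (hE.inv (sub_ne_zero.mpr (exp_two_mul_ne_one hBt))).congr_deriv
    (by rw [cothSubstDeriv, cothSubst, inv_pow, div_eq_mul_inv]; ring)

lemma cosh_div_sinh_eq_one_add_two_mul_cothSubst {t : ℝ} (hBt : B * t ≠ 0) :
    Real.cosh (B * t) / Real.sinh (B * t) = 1 + 2 * cothSubst B t := by
  have hE := sub_ne_zero.mpr (exp_two_mul_ne_one hBt)
  have hsinh : Real.sinh (B * t) ≠ 0 := Real.sinh_ne_zero.mpr hBt
  rw [exp_two_mul_mul_eq_sq] at hE
  rw [div_eq_iff hsinh, cothSubst, Real.cosh_eq, Real.sinh_eq, Real.exp_neg, exp_two_mul_mul_eq_sq]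
  field_simp
  ring

lemma div_sinh_eq_abs_cothSubstDeriv_mul (hB : 0 < B) {t : ℝ} (ht : 0 < t) :
    B / Real.sinh (B * t) =
      |cothSubstDeriv B t| * (cothSubst B t)⁻¹ * Real.exp (-(B * t)) := by
  have hψ := cothSubst_pos hB ht
  have hE := sub_ne_zero.mpr (exp_two_mul_ne_one (mul_pos hB ht).ne')
  rw [exp_two_mul_mul_eq_sq] at hE
  rw [cothSubstDeriv, abs_neg, abs_of_pos (by positivity), cothSubst, Real.sinh_eq, Real.exp_neg,
    exp_two_mul_mul_eq_sq]
  field_simp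

end CothSubst

section TricomiIntegrand

variable {ζ : ℝ} {a : ℂ}

lemma measurable_tricomiIntegrand : Measurable (tricomiIntegrand ζ a) := by
  unfold tricomiIntegrand; fun_prop

lemma norm_tricomiIntegrand_le (ha : 0 ≤ a.re) {τ : ℝ} (hτ : 0 < τ) :
    ‖tricomiIntegrand ζ a τ‖ ≤ τ ^ (a.re - 1) * Real.exp (-ζ * τ) := by
  have hnorm : ‖tricomiIntegrand ζ a τ‖ =
      τ ^ (a.re - 1) * Real.exp (-ζ * τ) * Real.exp (-a.re * Real.log (1 + τ)) := by
    simp only [tricomiIntegrand, norm_mul, Complex.norm_exp, Complex.re_mul_ofReal,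
      Complex.neg_re, Complex.sub_re, Complex.one_re, Complex.ofReal_re, Real.rpow_def_of_pos hτ]
    rw [mul_comm (Real.log τ)]
    ring
  have hlog : 0 ≤ Real.log (1 + τ) := Real.log_nonneg (by linarith)
  rw [hnorm]
  exact mul_le_of_le_one_right (by positivity) (Real.exp_le_one_iff.mpr (by nlinarith))

lemma integrableOn_tricomiIntegrand (hζ : 0 < ζ) (ha : 0 < a.re) :
    IntegrableOn (tricomiIntegrand ζ a) (Ioi 0) := by
  have hdom : IntegrableOn (fun τ : ℝ => τ ^ (a.re - 1) * Real.exp (-ζ * τ)) (Ioi 0) := by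
    simpa [Real.rpow_one] using
      integrableOn_rpow_mul_exp_neg_mul_rpow (by linarith : (-1 : ℝ) < a.re - 1) one_pos hζ
  refine hdom.mono' measurable_tricomiIntegrand.aestronglyMeasurable ?_
  filter_upwards [ae_restrict_mem measurableSet_Ioi] with τ hτ
  exact norm_tricomiIntegrand_le ha.le hτ

lemma tricomiIntegrand_eq {τ : ℝ} (hτ : 0 < τ) :
    tricomiIntegrand ζ a τ =
      Complex.exp (-(ζ : ℂ) * τ) * ((τ⁻¹ : ℝ) : ℂ) * Complex.exp (-a * Real.log (1 + τ⁻¹)) := by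
  have hlog : Real.log (1 + τ⁻¹) = Real.log (1 + τ) - Real.log τ := by
    rw [← Real.log_div (by positivity) hτ.ne', add_div, div_self hτ.ne', one_div, add_comm]
  have hinv : ((τ⁻¹ : ℝ) : ℂ) = Complex.exp (-(Real.log τ : ℂ)) := by
    rw [← Complex.ofReal_neg, ← Complex.ofReal_exp, Real.exp_neg, Real.exp_log hτ]
  simp only [tricomiIntegrand, hlog, hinv, ← Complex.exp_add]
  push_cast
  ring_nf

end TricomiIntegrand

section ChangeOfVariables

variable {E : Type*} [NormedAddCommGroup E] [NormedSpace ℝ E] {B : ℝ}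

lemma integrableOn_abs_deriv_smul_comp_cothSubst_iff (hB : 0 < B) (g : ℝ → E) :
    IntegrableOn (fun t => |cothSubstDeriv B t| • g (cothSubst B t)) (Ioi 0) ↔
      IntegrableOn g (Ioi 0) := by
  conv_rhs => rw [← cothSubst_image_Ioi hB]
  exact (integrableOn_image_iff_integrableOn_abs_deriv_smul measurableSet_Ioi
    (fun t ht => (hasDerivAt_cothSubst (mul_pos hB ht).ne').hasDerivWithinAt)
    (cothSubst_injective hB.ne').injOn g).symm

lemma integral_abs_deriv_smul_comp_cothSubst (hB : 0 < B) (g : ℝ → E) :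
    ∫ t in Ioi 0, |cothSubstDeriv B t| • g (cothSubst B t) = ∫ τ in Ioi 0, g τ := by
  conv_rhs => rw [← cothSubst_image_Ioi hB]
  exact (integral_image_eq_integral_abs_deriv_smul measurableSet_Ioi
    (fun t ht => (hasDerivAt_cothSubst (mul_pos hB ht).ne').hasDerivWithinAt)
    (cothSubst_injective hB.ne').injOn g).symm

end ChangeOfVariables

lemma heatKernelLaplaceIntegrand_eq {B ζ : ℝ} {z a : ℂ} (hB : 0 < B)
    (ha : a = 1 / 2 - z / (2 * B)) {t : ℝ} (ht : 0 < t) :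
    heatKernelLaplaceIntegrand B ζ z t = Complex.exp (-(ζ : ℂ) / 2) *
      (|cothSubstDeriv B t| • tricomiIntegrand ζ a (cothSubst B t)) := by
  have hB' : (B : ℂ) ≠ 0 := by exact_mod_cast hB.ne'
  have hpow : Complex.exp (-a * (2 * B * t : ℝ)) =
      Complex.exp (-(B * t : ℝ)) * Complex.exp (t * z) := by
    rw [← Complex.exp_add, ha]
    congr 1
    push_cast
    field_simp
    ring
  rw [heatKernelLaplaceIntegrand, cosh_div_sinh_eq_one_add_two_mul_cothSubst (mul_pos hB ht).ne',
    div_sinh_eq_abs_cothSubstDeriv_mul hB ht, tricomiIntegrand_eq (cothSubst_pos hB ht),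
    log_one_add_inv_cothSubst, hpow]
  have hcoth : -(ζ / 2 : ℂ) * (1 + 2 * (cothSubst B t : ℂ)) + t * z =
      -ζ / 2 + -ζ * (cothSubst B t : ℂ) + t * z := by ring
  push_cast
  rw [hcoth, Complex.exp_add, Complex.exp_add, Complex.real_smul]
  ring

theorem resolvent_kernel_integral_rep_general (B : ℝ) (hB : 0 < B) (ζ : ℝ) (hζ : 0 < ζ)
    (z : ℂ) (hz2 : z.re < B) (a : ℂ) (ha : a = 1/2 - z / (2 * B)) :
    IntegrableOn
      (fun t : ℝ => ((B / Real.sinh (B * t) : ℝ) : ℂ) *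
        Complex.exp (((-(ζ / 2) * (Real.cosh (B * t) / Real.sinh (B * t)) : ℝ) : ℂ)
          + (t : ℂ) * z))
      (Ioi (0 : ℝ)) ∧
    (∫ t in Ioi (0 : ℝ), ((B / Real.sinh (B * t) : ℝ) : ℂ) *
        Complex.exp (((-(ζ / 2) * (Real.cosh (B * t) / Real.sinh (B * t)) : ℝ) : ℂ)
          + (t : ℂ) * z))
      = Complex.exp (-(ζ : ℂ) / 2) *
        ∫ τ in Ioi (0 : ℝ), Complex.exp (-(ζ : ℂ) * (τ : ℂ)) *
          Complex.exp ((a - 1) * (Real.log τ : ℂ)) *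
          Complex.exp (-a * (Real.log (1 + τ) : ℂ)) := by
  have haRe : 0 < a.re := by
    rw [ha, show (2 * (B : ℂ)) = ((2 * B : ℝ) : ℂ) by push_cast; ring, Complex.sub_re,
      Complex.div_ofReal_re, sub_pos, div_lt_iff₀ (by positivity)]
    norm_num
    linarith
  have hpt : EqOn (heatKernelLaplaceIntegrand B ζ z)
      (fun t => Complex.exp (-(ζ : ℂ) / 2) *
        (|cothSubstDeriv B t| • tricomiIntegrand ζ a (cothSubst B t))) (Ioi 0) :=
    fun t ht => heatKernelLaplaceIntegrand_eq hB ha ht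
  refine ⟨?_, ?_⟩
  · refine IntegrableOn.congr_fun ?_ hpt.symm measurableSet_Ioi
    exact ((integrableOn_abs_deriv_smul_comp_cothSubst_iff hB _).mpr
      (integrableOn_tricomiIntegrand hζ haRe)).const_mul _
  · change ∫ t in Ioi 0, heatKernelLaplaceIntegrand B ζ z t =
      Complex.exp (-(ζ : ℂ) / 2) * ∫ τ in Ioi 0, tricomiIntegrand ζ a τ
    rw [setIntegral_congr_fun measurableSet_Ioi hpt, integral_const_mul,
      integral_abs_deriv_smul_comp_cothSubst hB]

/-- The Laplace transform in `t` of the radial part of the magnetic heat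
kernel converges absolutely and equals `e^{-ζ/2} Γ(a) U(a,1;ζ)` written via the standard
integral representation, where `a = 1/2 - z/(2B)`. -/
theorem resolvent_kernel_integral_rep (B : ℝ) (hB : 0 < B) (ζ : ℝ) (hζ : 0 < ζ)
    (z : ℂ) (hz1 : -B < z.re) (hz2 : z.re < B) (a : ℂ) (ha : a = 1/2 - z / (2 * B)) :
    IntegrableOn
      (fun t : ℝ => ((B / Real.sinh (B * t) : ℝ) : ℂ) *
        Complex.exp (((-(ζ / 2) * (Real.cosh (B * t) / Real.sinh (B * t)) : ℝ) : ℂ)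
          + (t : ℂ) * z))
      (Ioi (0 : ℝ)) ∧
    (∫ t in Ioi (0 : ℝ), ((B / Real.sinh (B * t) : ℝ) : ℂ) *
        Complex.exp (((-(ζ / 2) * (Real.cosh (B * t) / Real.sinh (B * t)) : ℝ) : ℂ)
          + (t : ℂ) * z))
      = Complex.exp (-(ζ : ℂ) / 2) *
        ∫ τ in Ioi (0 : ℝ), Complex.exp (-(ζ : ℂ) * (τ : ℂ)) *
          Complex.exp ((a - 1) * (Real.log τ : ℂ)) *
          Complex.exp (-a * (Real.log (1 + τ) : ℂ)) :=
  resolvent_kernel_integral_rep_general B hB ζ hζ z hz2 a ha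
end

section
/- Let B > 0. There exist C > 0 and N ∈ ℕ such that for every integer n ≥ N and every z ∈ ℂ with |z − B(2n+1)| = B, one has Σ_{k=1}^{∞} k^{−1/2} · |B(2k+1) − z|^{−1} ≤ C n^{−1/2} log n. -/
set_option maxHeartbeats 1000000

open MeasureTheory Set
open Finset

private lemma rsb_rpow_neg_half (x : ℝ) (hx : 0 ≤ x) :
    x ^ (-(1:ℝ)/2) = (Real.sqrt x)⁻¹ := by
  rw [Real.sqrt_eq_rpow, ← Real.rpow_neg hx]
  norm_num

private lemma rsb_sum_inv_sqrt (m : ℕ) :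
    ∑ k ∈ range m, (Real.sqrt ((k:ℝ)+1))⁻¹ ≤ 2 * Real.sqrt m := by
  induction m with
  | zero => simp
  | succ m ih =>
    rw [Finset.sum_range_succ]
    have ha := Real.sq_sqrt (by positivity : (0:ℝ) ≤ (m:ℝ))
    have hb := Real.sq_sqrt (by positivity : (0:ℝ) ≤ (m:ℝ)+1)
    have ha0 := Real.sqrt_nonneg (m:ℝ)
    have hb0 : 0 < Real.sqrt ((m:ℝ)+1) := Real.sqrt_pos.2 (by positivity)
    have h1 : (Real.sqrt ((m:ℝ)+1))⁻¹ ≤ 2 * Real.sqrt ((m:ℝ)+1) - 2 * Real.sqrt m := by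
      rw [inv_eq_one_div, div_le_iff₀ hb0]
      nlinarith [sq_nonneg (Real.sqrt ((m:ℝ)+1) - Real.sqrt m)]
    have hc : ((m+1:ℕ):ℝ) = (m:ℝ)+1 := by push_cast; ring
    rw [hc]
    linarith

private lemma rsb_tail (K : ℕ) (hK : 1 ≤ K) (m : ℕ) :
    ∑ k ∈ Finset.Ico K m, (((k:ℝ)+1) * Real.sqrt ((k:ℝ)+1))⁻¹ ≤ 2 / Real.sqrt K := by
  have main : ∀ m : ℕ, ∑ k ∈ Finset.Ico K m, (((k:ℝ)+1) * Real.sqrt ((k:ℝ)+1))⁻¹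
      ≤ 2 / Real.sqrt K - 2 / Real.sqrt (max K m) := by
    intro m
    induction m with
    | zero =>
      rw [Finset.Ico_eq_empty (by omega)]
      rw [max_eq_left (by exact_mod_cast Nat.zero_le K : ((0:ℕ):ℝ) ≤ (K:ℝ))]
      simp
    | succ m ih =>
      rcases le_or_gt (m+1) K with h | h
      · rw [Finset.Ico_eq_empty (by omega)]
        rw [max_eq_left (by exact_mod_cast h : ((m+1:ℕ):ℝ) ≤ (K:ℝ))]
        simp
      · have hKm : K ≤ m := by omega
        rw [Finset.sum_Ico_succ_top hKm]
        rw [max_eq_right (by exact_mod_cast hKm : (K:ℝ) ≤ (m:ℝ))] at ih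
        rw [max_eq_right (by exact_mod_cast (by omega : K ≤ m+1) : (K:ℝ) ≤ ((m+1:ℕ):ℝ))]
        have hm1 : 1 ≤ m := hK.trans hKm
        have hm1' : (1:ℝ) ≤ (m:ℝ) := by exact_mod_cast hm1
        have ha := Real.sq_sqrt (by positivity : (0:ℝ) ≤ (m:ℝ))
        have hb := Real.sq_sqrt (by positivity : (0:ℝ) ≤ (m:ℝ)+1)
        have ha0 : 0 < Real.sqrt (m:ℝ) := Real.sqrt_pos.2 (by linarith)
        have hb0 : 0 < Real.sqrt ((m:ℝ)+1) := Real.sqrt_pos.2 (by positivity)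
        have hab : Real.sqrt (m:ℝ) ≤ Real.sqrt ((m:ℝ)+1) := Real.sqrt_le_sqrt (by linarith)
        have key : (((m:ℝ)+1) * Real.sqrt ((m:ℝ)+1))⁻¹
            ≤ 2 / Real.sqrt (m:ℝ) - 2 / Real.sqrt ((m:ℝ)+1) := by
          set a := Real.sqrt (m:ℝ)
          set b := Real.sqrt ((m:ℝ)+1)
          have hdiff : 2/a - 2/b = 2*(b-a)/(a*b) := by field_simp
          rw [hdiff]
          rw [inv_eq_one_div, div_le_div_iff₀ (by nlinarith) (by positivity)]
          nlinarith [sq_nonneg ((b-a)*b), mul_nonneg (sub_nonneg.2 hab) hb0.le,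
            mul_nonneg (mul_nonneg (sub_nonneg.2 hab) hb0.le) hb0.le]
        have hc : ((m+1:ℕ):ℝ) = (m:ℝ)+1 := by push_cast; ring
        rw [hc]
        linarith
  calc ∑ k ∈ Finset.Ico K m, (((k:ℝ)+1) * Real.sqrt ((k:ℝ)+1))⁻¹
      ≤ 2 / Real.sqrt K - 2 / Real.sqrt (max K m) := main m
    _ ≤ 2 / Real.sqrt K := by
        have : 0 ≤ 2 / Real.sqrt (max K m) := by positivity
        linarith

private lemma rsb_harmonic_sum (m : ℕ) :
    ∑ k ∈ range m, ((k:ℝ)+1)⁻¹ ≤ 1 + Real.log m := by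
  have h := harmonic_le_one_add_log m
  have he : ((harmonic m : ℚ) : ℝ) = ∑ k ∈ range m, ((k:ℝ)+1)⁻¹ := by
    rw [harmonic]
    push_cast
    ring
  linarith [he ▸ h]

private lemma rsb_center_sum (n : ℕ) (hn : 1 ≤ n) :
    ∑ k ∈ range (4*n), (max 1 |((k:ℝ)+1) - (n:ℝ)|)⁻¹ ≤ 3 * (1 + Real.log ((3*n:ℕ):ℝ)) := by
  have hsplit : ∑ k ∈ range (4*n), (max 1 |((k:ℝ)+1) - (n:ℝ)|)⁻¹
      = ∑ k ∈ range n, (max 1 |((k:ℝ)+1) - (n:ℝ)|)⁻¹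
        + ∑ k ∈ Finset.Ico n (4*n), (max 1 |((k:ℝ)+1) - (n:ℝ)|)⁻¹ := by
    rw [range_eq_Ico, range_eq_Ico]
    exact (Finset.sum_Ico_consecutive (fun k : ℕ => (max 1 |((k:ℝ)+1) - (n:ℝ)|)⁻¹) (Nat.zero_le n) (by omega : n ≤ 4*n)).symm
  have hL : ∑ k ∈ range n, (max 1 |((k:ℝ)+1) - (n:ℝ)|)⁻¹
      ≤ 2 * ∑ k ∈ range n, ((k:ℝ)+1)⁻¹ := by
    have hrefl : ∑ k ∈ range n, ((n:ℝ)-(k:ℝ))⁻¹ = ∑ k ∈ range n, ((k:ℝ)+1)⁻¹ := by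
      rw [← Finset.sum_range_reflect (fun k => ((k:ℝ)+1)⁻¹) n]
      refine Finset.sum_congr rfl fun k hk => ?_
      have hk' : k < n := Finset.mem_range.1 hk
      have : ((n - 1 - k : ℕ):ℝ) + 1 = (n:ℝ) - (k:ℝ) := by
        have h2 : (n - 1 - k) + (k + 1) = n := by omega
        have := congrArg (fun x : ℕ => (x:ℝ)) h2
        push_cast at this
        linarith
      rw [this]
    calc ∑ k ∈ range n, (max 1 |((k:ℝ)+1) - (n:ℝ)|)⁻¹
        ≤ ∑ k ∈ range n, 2 * ((n:ℝ)-(k:ℝ))⁻¹ := ?_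
      _ = 2 * ∑ k ∈ range n, ((n:ℝ)-(k:ℝ))⁻¹ := (Finset.mul_sum _ _ _).symm
      _ = 2 * ∑ k ∈ range n, ((k:ℝ)+1)⁻¹ := by rw [hrefl]
    refine Finset.sum_le_sum fun k hk => ?_
    have hk' : k < n := Finset.mem_range.1 hk
    have ht : (1:ℝ) ≤ (n:ℝ) - (k:ℝ) := by
      have : (k:ℝ) + 1 ≤ (n:ℝ) := by exact_mod_cast hk'
      linarith
    set t : ℝ := (n:ℝ) - (k:ℝ) with htdef
    have habs : |((k:ℝ)+1) - (n:ℝ)| = t - 1 := by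
      rw [abs_of_nonpos (by linarith)]; ring
    rw [habs]
    have hM : t/2 ≤ max 1 (t-1) := by
      rcases le_total t 2 with h | h
      · exact le_max_of_le_left (by linarith)
      · exact le_max_of_le_right (by linarith)
    have h0 : (0:ℝ) < t/2 := by linarith
    calc (max 1 (t-1))⁻¹ ≤ (t/2)⁻¹ := by
          apply inv_anti₀ h0 hM
      _ = 2 * t⁻¹ := by rw [div_eq_mul_inv, mul_inv, inv_inv]; ring
  have hR : ∑ k ∈ Finset.Ico n (4*n), (max 1 |((k:ℝ)+1) - (n:ℝ)|)⁻¹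
      = ∑ i ∈ range (3*n), ((i:ℝ)+1)⁻¹ := by
    rw [Finset.sum_Ico_eq_sum_range]
    have h3 : 4*n - n = 3*n := by omega
    rw [h3]
    refine Finset.sum_congr rfl fun i _ => ?_
    have habs : |(((n + i:ℕ)):ℝ)+1 - (n:ℝ)| = (i:ℝ) + 1 := by
      rw [show (((n + i:ℕ)):ℝ)+1 - (n:ℝ) = (i:ℝ)+1 by push_cast; ring]
      exact abs_of_nonneg (by positivity)
    rw [habs, max_eq_right (le_add_of_nonneg_left (Nat.cast_nonneg i))]
  have hHn : ∑ k ∈ range n, ((k:ℝ)+1)⁻¹ ≤ ∑ k ∈ range (3*n), ((k:ℝ)+1)⁻¹ := by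
    apply Finset.sum_le_sum_of_subset_of_nonneg
    · exact Finset.range_subset_range.2 (by omega)
    · intro i _ _; positivity
  have hH := rsb_harmonic_sum (3*n)
  rw [hsplit, hR]
  linarith

/-- On the circle of radius `B` around the Landau level `Λ_n = B(2n+1)`,
the sum `∑_{k=1}^∞ k^{-1/2} |Λ_k - z|^{-1}` is `O(n^{-1/2} log n)`. The sum over `k ≥ 1`
is written as a sum over `k : ℕ` of the terms with index `k + 1`. -/
theorem resolvent_sum_bound (B : ℝ) (hB : 0 < B) :
    ∃ C > 0, ∃ N : ℕ, ∀ n : ℕ, N ≤ n → ∀ z : ℂ,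
      ‖z - ((B * (2 * n + 1) : ℝ) : ℂ)‖ = B →
      Summable (fun k : ℕ =>
        ((k + 1 : ℕ) : ℝ) ^ (-(1 : ℝ) / 2) *
          (‖((B * (2 * (k + 1) + 1) : ℝ) : ℂ) - z‖)⁻¹) ∧
      (∑' k : ℕ, ((k + 1 : ℕ) : ℝ) ^ (-(1 : ℝ) / 2) *
          (‖((B * (2 * (k + 1) + 1) : ℝ) : ℂ) - z‖)⁻¹)
        ≤ C * (n : ℝ) ^ (-(1 : ℝ) / 2) * Real.log n := by
  refine ⟨32 / B, by positivity, 3, fun n hn z hz => ?_⟩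
  set a : ℕ → ℝ := fun k : ℕ =>
    ((k + 1 : ℕ) : ℝ) ^ (-(1 : ℝ) / 2) *
      (‖((B * (2 * (k + 1) + 1) : ℝ) : ℂ) - z‖)⁻¹ with hadef
  have hn3 : (3:ℝ) ≤ (n:ℝ) := by exact_mod_cast hn
  have hn0 : (0:ℝ) < (n:ℝ) := by linarith
  set s := Real.sqrt (n:ℝ) with hsdef
  have hs0 : 0 < s := Real.sqrt_pos.2 hn0
  have hs2 : s^2 = (n:ℝ) := Real.sq_sqrt hn0.le
  have hlog1 : (1:ℝ) ≤ Real.log n := by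
    rw [Real.le_log_iff_exp_le hn0]
    have := Real.exp_one_lt_d9
    linarith
  have hlog3 : Real.log 3 ≤ 2 := by
    have := Real.log_le_sub_one_of_pos (by norm_num : (0:ℝ) < 3)
    linarith
  set M : ℕ → ℝ := fun k => max 1 |((k:ℝ)+1) - (n:ℝ)| with hMdef
  have hM1 : ∀ k, (1:ℝ) ≤ M k := fun k => le_max_left _ _
  have hM0 : ∀ k, (0:ℝ) < M k := fun k => lt_of_lt_of_le one_pos (hM1 k)
  -- resolvent lower bound
  have lower : ∀ k : ℕ, B * M k ≤ ‖((B * (2 * ((k:ℝ) + 1) + 1) : ℝ) : ℂ) - z‖ := by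
    intro k
    have hd : ‖((B * (2 * ((k:ℝ) + 1) + 1) : ℝ) : ℂ) - ((B * (2 * (n:ℝ) + 1) : ℝ) : ℂ)‖
        = 2 * B * |((k:ℝ)+1) - (n:ℝ)| := by
      rw [← Complex.ofReal_sub, Complex.norm_real, Real.norm_eq_abs,
        show (B * (2 * ((k:ℝ) + 1) + 1)) - (B * (2 * (n:ℝ) + 1))
          = 2*B*(((k:ℝ)+1) - (n:ℝ)) by ring,
        abs_mul, abs_of_pos (by linarith : (0:ℝ) < 2*B)]
    have htri := norm_sub_le_norm_sub_add_norm_sub (((B * (2 * ((k:ℝ) + 1) + 1) : ℝ) : ℂ)) z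
      (((B * (2 * (n:ℝ) + 1) : ℝ) : ℂ))
    rcases eq_or_ne (k+1) n with he | he
    · have hc : ((k:ℝ)+1) = (n:ℝ) := by exact_mod_cast he
      have hM : M k = 1 := by
        rw [hMdef]; simp [hc]
      rw [hM, mul_one]
      have h2 : ‖((B * (2 * ((k:ℝ) + 1) + 1) : ℝ) : ℂ) - z‖
          = ‖z - ((B * (2 * (n:ℝ) + 1) : ℝ) : ℂ)‖ := by
        rw [hc]
        exact norm_sub_rev _ _
      rw [h2, hz]
    · have h1 : (1:ℝ) ≤ |((k:ℝ)+1) - (n:ℝ)| := by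
        rcases Nat.lt_or_ge (k+1) n with h | h
        · have hc : ((k:ℝ)+1)+1 ≤ (n:ℝ) := by exact_mod_cast h
          rw [abs_of_nonpos (by linarith)]
          linarith
        · have h' : n + 1 ≤ k + 1 := by omega
          have hc : (n:ℝ)+1 ≤ (k:ℝ)+1 := by exact_mod_cast h'
          rw [abs_of_nonneg (by linarith)]
          linarith
      have hMk : M k = |((k:ℝ)+1) - (n:ℝ)| := max_eq_right h1
      rw [hMk]
      rw [hz, hd] at htri
      nlinarith [mul_le_mul_of_nonneg_left h1 hB.le]
  -- pointwise term bound
  have ha0 : ∀ k, 0 ≤ a k := by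
    intro k
    rw [hadef]
    positivity
  have term : ∀ k, a k ≤ B⁻¹ * ((Real.sqrt ((k:ℝ)+1))⁻¹ * (M k)⁻¹) := by
    intro k
    rw [hadef]
    dsimp only
    have h1 : ((k + 1 : ℕ) : ℝ) ^ (-(1 : ℝ) / 2) = (Real.sqrt ((k:ℝ)+1))⁻¹ := by
      rw [show ((k + 1 : ℕ) : ℝ) = (k:ℝ)+1 by push_cast; ring,
        rsb_rpow_neg_half _ (by positivity)]
    rw [h1]
    have h2 : (‖((B * (2 * ((k:ℝ) + 1) + 1) : ℝ) : ℂ) - z‖)⁻¹ ≤ (B * M k)⁻¹ :=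
      inv_anti₀ (by positivity) (lower k)
    calc (Real.sqrt ((k:ℝ)+1))⁻¹ * (‖((B * (2 * ((k:ℝ) + 1) + 1) : ℝ) : ℂ) - z‖)⁻¹
        ≤ (Real.sqrt ((k:ℝ)+1))⁻¹ * (B * M k)⁻¹ :=
          mul_le_mul_of_nonneg_left h2 (by positivity)
      _ = B⁻¹ * ((Real.sqrt ((k:ℝ)+1))⁻¹ * (M k)⁻¹) := by rw [mul_inv]; ring
  -- the two regime bounds
  have key1 : ∀ k : ℕ, (Real.sqrt ((k:ℝ)+1))⁻¹ * (M k)⁻¹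
      ≤ 2*s⁻¹*(M k)⁻¹ + (4/3)*(n:ℝ)⁻¹*(Real.sqrt ((k:ℝ)+1))⁻¹ := by
    intro k
    have hu0 : 0 < Real.sqrt ((k:ℝ)+1) := Real.sqrt_pos.2 (by positivity)
    have hu2 : (Real.sqrt ((k:ℝ)+1))^2 = (k:ℝ)+1 := Real.sq_sqrt (by positivity)
    set u := Real.sqrt ((k:ℝ)+1)
    have hMpos := hM0 k
    rcases le_or_gt (n:ℝ) (4*((k:ℝ)+1)) with h | h
    · have hsu : s ≤ 2*u := by nlinarith
      have hinv : u⁻¹ ≤ 2*s⁻¹ := by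
        rw [show 2*s⁻¹ = (s/2)⁻¹ by rw [div_eq_mul_inv, mul_inv]; field_simp]
        exact inv_anti₀ (by positivity) (by linarith)
      have h2 : u⁻¹ * (M k)⁻¹ ≤ 2*s⁻¹*(M k)⁻¹ :=
        mul_le_mul_of_nonneg_right hinv (by positivity)
      have h3 : 0 ≤ (4/3)*(n:ℝ)⁻¹*u⁻¹ := by positivity
      linarith
    · have hkn : ((k:ℝ)+1) ≤ (n:ℝ) := by nlinarith
      have habs : |((k:ℝ)+1) - (n:ℝ)| = (n:ℝ) - ((k:ℝ)+1) := by
        rw [abs_of_nonpos (by linarith : ((k:ℝ)+1) - (n:ℝ) ≤ 0)]; ring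
      have h34 : (3/4)*(n:ℝ) ≤ M k := by
        calc (3/4)*(n:ℝ) ≤ (n:ℝ) - ((k:ℝ)+1) := by linarith
          _ = |((k:ℝ)+1) - (n:ℝ)| := habs.symm
          _ ≤ M k := le_max_right _ _
      have hinv : (M k)⁻¹ ≤ (4/3)*(n:ℝ)⁻¹ := by
        rw [show (4/3)*(n:ℝ)⁻¹ = ((3/4)*(n:ℝ))⁻¹ by rw [mul_inv]; norm_num]
        exact inv_anti₀ (by positivity) h34
      have h2 : u⁻¹ * (M k)⁻¹ ≤ u⁻¹ * ((4/3)*(n:ℝ)⁻¹) :=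
        mul_le_mul_of_nonneg_left hinv (by positivity)
      have h3 : 0 ≤ 2*s⁻¹*(M k)⁻¹ := by positivity
      nlinarith
  have key2 : ∀ k : ℕ, 4*n ≤ k → (Real.sqrt ((k:ℝ)+1))⁻¹ * (M k)⁻¹
      ≤ 2 * (((k:ℝ)+1) * Real.sqrt ((k:ℝ)+1))⁻¹ := by
    intro k hk
    have hu0 : 0 < Real.sqrt ((k:ℝ)+1) := Real.sqrt_pos.2 (by positivity)
    set u := Real.sqrt ((k:ℝ)+1)
    have hk' : (4*(n:ℝ)) ≤ (k:ℝ) := by exact_mod_cast hk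
    have habs : |((k:ℝ)+1) - (n:ℝ)| = ((k:ℝ)+1) - (n:ℝ) := abs_of_nonneg (by linarith)
    have h34 : (3/4)*((k:ℝ)+1) ≤ M k := by
      calc (3/4)*((k:ℝ)+1) ≤ ((k:ℝ)+1) - (n:ℝ) := by linarith
        _ = |((k:ℝ)+1) - (n:ℝ)| := habs.symm
        _ ≤ M k := le_max_right _ _
    have hinv : (M k)⁻¹ ≤ (4/3)*((k:ℝ)+1)⁻¹ := by
      rw [show (4/3)*((k:ℝ)+1)⁻¹ = ((3/4)*((k:ℝ)+1))⁻¹ by rw [mul_inv]; norm_num]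
      exact inv_anti₀ (by positivity) h34
    calc u⁻¹ * (M k)⁻¹ ≤ u⁻¹ * ((4/3)*((k:ℝ)+1)⁻¹) :=
          mul_le_mul_of_nonneg_left hinv (by positivity)
      _ ≤ 2 * (((k:ℝ)+1) * u)⁻¹ := by
          rw [mul_inv]
          have : (0:ℝ) ≤ ((k:ℝ)+1)⁻¹ * u⁻¹ := by positivity
          nlinarith
  -- main finite-sum bound
  have key : ∀ m : ℕ, ∑ k ∈ range m, a k ≤ 32 / B * (n:ℝ) ^ (-(1:ℝ)/2) * Real.log n := by
    intro m
    have hg0 : ∀ k : ℕ, (0:ℝ) ≤ (Real.sqrt ((k:ℝ)+1))⁻¹ * (M k)⁻¹ := by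
      intro k
      have := hM0 k
      positivity
    have step1 : ∑ k ∈ range m, a k
        ≤ B⁻¹ * ∑ k ∈ range m, (Real.sqrt ((k:ℝ)+1))⁻¹ * (M k)⁻¹ := by
      rw [Finset.mul_sum]
      exact Finset.sum_le_sum fun k _ => term k
    have hsplit := Finset.sum_filter_add_sum_filter_not (range m) (fun k => k < 4*n)
      (fun k => (Real.sqrt ((k:ℝ)+1))⁻¹ * (M k)⁻¹)
    -- part A
    have hA : ∑ k ∈ (range m).filter (fun k => k < 4*n), (Real.sqrt ((k:ℝ)+1))⁻¹ * (M k)⁻¹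
        ≤ 2*s⁻¹ * (3*(1 + Real.log ((3*n:ℕ):ℝ)))
          + (4/3)*(n:ℝ)⁻¹ * (2 * Real.sqrt ((4*n:ℕ):ℝ)) := by
      calc ∑ k ∈ (range m).filter (fun k => k < 4*n), (Real.sqrt ((k:ℝ)+1))⁻¹ * (M k)⁻¹
          ≤ ∑ k ∈ (range m).filter (fun k => k < 4*n),
              (2*s⁻¹*(M k)⁻¹ + (4/3)*(n:ℝ)⁻¹*(Real.sqrt ((k:ℝ)+1))⁻¹) :=
            Finset.sum_le_sum fun k _ => key1 k
        _ ≤ ∑ k ∈ range (4*n), (2*s⁻¹*(M k)⁻¹ + (4/3)*(n:ℝ)⁻¹*(Real.sqrt ((k:ℝ)+1))⁻¹) := by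
            apply Finset.sum_le_sum_of_subset_of_nonneg
            · intro k hk
              simp only [Finset.mem_filter, Finset.mem_range] at hk ⊢
              exact hk.2
            · intro k _ _
              have := hM0 k
              positivity
        _ = 2*s⁻¹ * ∑ k ∈ range (4*n), (M k)⁻¹
            + (4/3)*(n:ℝ)⁻¹ * ∑ k ∈ range (4*n), (Real.sqrt ((k:ℝ)+1))⁻¹ := by
            rw [Finset.sum_add_distrib, Finset.mul_sum, Finset.mul_sum]
        _ ≤ 2*s⁻¹ * (3*(1 + Real.log ((3*n:ℕ):ℝ)))
            + (4/3)*(n:ℝ)⁻¹ * (2 * Real.sqrt ((4*n:ℕ):ℝ)) := by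
            apply add_le_add
            · apply mul_le_mul_of_nonneg_left _ (by positivity)
              have := rsb_center_sum n (by omega)
              simpa [hMdef] using this
            · apply mul_le_mul_of_nonneg_left _ (by positivity)
              exact rsb_sum_inv_sqrt (4*n)
    -- part B
    have hfB : (range m).filter (fun k => ¬ k < 4*n) ⊆ Finset.Ico (4*n) m := by
      intro k hk
      simp only [Finset.mem_filter, Finset.mem_range, Finset.mem_Ico, not_lt] at hk ⊢
      omega
    have hB2 : ∑ k ∈ (range m).filter (fun k => ¬ k < 4*n), (Real.sqrt ((k:ℝ)+1))⁻¹ * (M k)⁻¹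
        ≤ 2 * (2 / Real.sqrt ((4*n:ℕ):ℝ)) := by
      calc ∑ k ∈ (range m).filter (fun k => ¬ k < 4*n), (Real.sqrt ((k:ℝ)+1))⁻¹ * (M k)⁻¹
          ≤ ∑ k ∈ (range m).filter (fun k => ¬ k < 4*n),
              2 * (((k:ℝ)+1) * Real.sqrt ((k:ℝ)+1))⁻¹ := by
            refine Finset.sum_le_sum fun k hk => ?_
            simp only [Finset.mem_filter, Finset.mem_range, not_lt] at hk
            exact key2 k hk.2
        _ ≤ ∑ k ∈ Finset.Ico (4*n) m, 2 * (((k:ℝ)+1) * Real.sqrt ((k:ℝ)+1))⁻¹ := by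
            apply Finset.sum_le_sum_of_subset_of_nonneg hfB
            intro k _ _
            positivity
        _ = 2 * ∑ k ∈ Finset.Ico (4*n) m, (((k:ℝ)+1) * Real.sqrt ((k:ℝ)+1))⁻¹ :=
            (Finset.mul_sum _ _ _).symm
        _ ≤ 2 * (2 / Real.sqrt ((4*n:ℕ):ℝ)) := by
            apply mul_le_mul_of_nonneg_left _ (by norm_num)
            exact rsb_tail (4*n) (by omega) m
    -- arithmetic
    have h4 : Real.sqrt ((4*n:ℕ):ℝ) = 2*s := by
      rw [show ((4*n:ℕ):ℝ) = (2*s)^2 by push_cast; rw [mul_pow, hs2]; norm_num]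
      exact Real.sqrt_sq (by positivity)
    have hlog3n : Real.log ((3*n:ℕ):ℝ) = Real.log 3 + Real.log n := by
      rw [show ((3*n:ℕ):ℝ) = 3*(n:ℝ) by push_cast; ring,
        Real.log_mul (by norm_num) (by positivity)]
    have hbound : 2*s⁻¹ * (3*(1 + Real.log ((3*n:ℕ):ℝ)))
        + (4/3)*(n:ℝ)⁻¹ * (2 * Real.sqrt ((4*n:ℕ):ℝ))
        + 2 * (2 / Real.sqrt ((4*n:ℕ):ℝ))
        ≤ 32 * s⁻¹ * Real.log n := by
      rw [h4, hlog3n]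
      have e1 : (n:ℝ)⁻¹ * (2*(2*s)) = 4*s⁻¹ := by
        rw [← hs2]
        field_simp
        ring
      have e2 : (2:ℝ) / (2*s) = s⁻¹ := by
        field_simp
      rw [show (4/3:ℝ)*(n:ℝ)⁻¹ * (2*(2*s)) = (4/3)*((n:ℝ)⁻¹ * (2*(2*s))) by ring, e1, e2]
      have t0 : (0:ℝ) ≤ s⁻¹ := by positivity
      nlinarith [mul_le_mul_of_nonneg_left hlog3 t0, mul_le_mul_of_nonneg_left hlog1 t0]
    have hrw : (n:ℝ) ^ (-(1:ℝ)/2) = s⁻¹ := by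
      rw [rsb_rpow_neg_half _ hn0.le]
    calc ∑ k ∈ range m, a k
        ≤ B⁻¹ * ∑ k ∈ range m, (Real.sqrt ((k:ℝ)+1))⁻¹ * (M k)⁻¹ := step1
      _ = B⁻¹ * (∑ k ∈ (range m).filter (fun k => k < 4*n), (Real.sqrt ((k:ℝ)+1))⁻¹ * (M k)⁻¹
          + ∑ k ∈ (range m).filter (fun k => ¬ k < 4*n), (Real.sqrt ((k:ℝ)+1))⁻¹ * (M k)⁻¹) := by
          rw [hsplit]
      _ ≤ B⁻¹ * (32 * s⁻¹ * Real.log n) := by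
          apply mul_le_mul_of_nonneg_left _ (by positivity)
          linarith
      _ = 32 / B * (n:ℝ) ^ (-(1:ℝ)/2) * Real.log n := by
          rw [hrw]; ring
  exact ⟨summable_of_sum_range_le ha0 key, Real.tsum_le_of_sum_range_le ha0 key⟩
end

section
/- Let B > 0 and let V ∈ C_0^∞(ℝ²) be real-valued. Define W(z) = ∫_{ℝ²} V(y) V(y+z) dy for z ∈ ℝ². Then there exists C > 0 such that for all t ∈ (0,1], | ∫₀^t [s / (sinh(Bs) sinh(B(t−s)))] · ∫_{ℝ²} exp(−(B/4)(coth(Bs) + coth(B(t−s))) |z|²) · (W(z) − W(0)) dz ds | ≤ C t². -/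
open MeasureTheory Set Real

lemma aux_sinh_le {x : ℝ} (hx : 0 ≤ x) : Real.sinh x ≤ x * Real.cosh x := by
  have key : MonotoneOn (fun y => y * Real.cosh y - Real.sinh y) (Ici (0:ℝ)) := by
    apply monotoneOn_of_deriv_nonneg (convex_Ici 0)
    · fun_prop
    · intro y hy
      exact (((hasDerivAt_id y).mul (Real.hasDerivAt_cosh y)).sub
        (Real.hasDerivAt_sinh y)).differentiableAt.differentiableWithinAt
    · intro y hy
      simp only [interior_Ici, mem_Ioi] at hy
      have h : deriv (fun y => y * Real.cosh y - Real.sinh y) y = y * Real.sinh y := by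
        have h2 : HasDerivAt (fun y => y * Real.cosh y - Real.sinh y)
            (1 * Real.cosh y + y * Real.sinh y - Real.cosh y) y := by
          exact ((hasDerivAt_id y).mul (Real.hasDerivAt_cosh y)).sub
            (Real.hasDerivAt_sinh y)
        rw [h2.deriv]; ring
      rw [h]
      positivity
  have h0 := key (self_mem_Ici) hx hx
  simp at h0
  linarith

lemma aux_gauss_integrable {a : ℝ} (ha : 0 < a) :
    Integrable (fun z : EuclideanSpace ℝ (Fin 2) => Real.exp (-a * ‖z‖^2)) := by
  have h := (GaussianFourier.integrable_cexp_neg_mul_sq_norm_add (V := EuclideanSpace ℝ (Fin 2))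
    (b := (a:ℂ)) (by simpa using ha) 0 0).norm
  refine h.congr (Filter.Eventually.of_forall fun z => ?_)
  simp [Complex.norm_exp]
  left
  norm_cast

lemma aux_gauss_integral {a : ℝ} (ha : 0 < a) :
    ∫ z : EuclideanSpace ℝ (Fin 2), Real.exp (-a * ‖z‖^2) = Real.pi / a := by
  rw [GaussianFourier.integral_rexp_neg_mul_sq_norm ha]
  norm_num

lemma aux_moment_ptwise {a : ℝ} (ha : 0 < a) (z : EuclideanSpace ℝ (Fin 2)) :
    ‖z‖^2 * Real.exp (-a * ‖z‖^2) ≤ (2/a) * Real.exp (-(a/2) * ‖z‖^2) := by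
  have h1 : (a/2) * ‖z‖^2 ≤ Real.exp ((a/2) * ‖z‖^2) := by
    have := Real.add_one_le_exp ((a/2) * ‖z‖^2)
    linarith
  have h2 : ‖z‖^2 ≤ (2/a) * Real.exp ((a/2) * ‖z‖^2) := by
    rw [div_mul_eq_mul_div, le_div_iff₀ ha]
    nlinarith [Real.exp_pos ((a/2) * ‖z‖^2)]
  calc ‖z‖^2 * Real.exp (-a * ‖z‖^2)
      ≤ ((2/a) * Real.exp ((a/2) * ‖z‖^2)) * Real.exp (-a * ‖z‖^2) := by
        exact mul_le_mul_of_nonneg_right h2 (Real.exp_nonneg _)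
    _ = (2/a) * Real.exp (-(a/2) * ‖z‖^2) := by
        rw [mul_assoc, ← Real.exp_add]; ring_nf

lemma aux_moment_integrable {a : ℝ} (ha : 0 < a) :
    Integrable (fun z : EuclideanSpace ℝ (Fin 2) => ‖z‖^2 * Real.exp (-a * ‖z‖^2)) := by
  refine ((aux_gauss_integrable (half_pos ha)).const_mul (2/a)).mono ?_ ?_
  · exact ((continuous_norm.pow 2).mul (by fun_prop)).aestronglyMeasurable
  · refine Filter.Eventually.of_forall fun z => ?_
    have h := aux_moment_ptwise ha z
    have h0 : (0:ℝ) ≤ ‖z‖^2 * Real.exp (-a * ‖z‖^2) := by positivity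
    rw [Real.norm_eq_abs, Real.norm_eq_abs, abs_of_nonneg h0, abs_of_nonneg (by positivity)]
    exact h

lemma aux_moment_le {a : ℝ} (ha : 0 < a) :
    ∫ z : EuclideanSpace ℝ (Fin 2), ‖z‖^2 * Real.exp (-a * ‖z‖^2) ≤ 4 * Real.pi / a^2 := by
  have h1 : ∫ z : EuclideanSpace ℝ (Fin 2), ‖z‖^2 * Real.exp (-a * ‖z‖^2)
      ≤ ∫ z : EuclideanSpace ℝ (Fin 2), (2/a) * Real.exp (-(a/2) * ‖z‖^2) := by
    exact integral_mono (aux_moment_integrable ha)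
      ((aux_gauss_integrable (half_pos ha)).const_mul (2/a)) (aux_moment_ptwise ha)
  rw [MeasureTheory.integral_const_mul, aux_gauss_integral (half_pos ha)] at h1
  calc ∫ z : EuclideanSpace ℝ (Fin 2), ‖z‖^2 * Real.exp (-a * ‖z‖^2)
      ≤ (2/a) * (Real.pi / (a/2)) := h1
    _ = 4 * Real.pi / a^2 := by field_simp; ring

lemma aux_W_bound (V : EuclideanSpace ℝ (Fin 2) → ℝ) (hV : ContDiff ℝ (⊤ : ℕ∞) V)
    (hVsupp : HasCompactSupport V) :
    ∃ C0 ≥ 0, ∀ z : EuclideanSpace ℝ (Fin 2),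
      |(∫ y, V y * V (y + z)) - ∫ y, V y * V y| ≤ C0 * ‖z‖^2 := by
  classical
  obtain ⟨Cb, hCb⟩ := (hVsupp.fderiv (𝕜 := ℝ)).exists_bound_of_continuous
    (hV.continuous_fderiv (by simp))
  set L : ℝ := max Cb 0 with hLdef
  have hL0 : 0 ≤ L := le_max_right _ _
  have hLip : LipschitzWith L.toNNReal V := by
    apply lipschitzWith_of_nnnorm_fderiv_le (hV.differentiable (by simp))
    intro x
    rw [← norm_toNNReal]
    exact Real.toNNReal_mono ((hCb x).trans (le_max_left _ _))
  have hlipest : ∀ y z : EuclideanSpace ℝ (Fin 2), |V (y + z) - V y| ≤ L * ‖z‖ := by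
    intro y z
    have h := hLip.dist_le_mul (y + z) y
    rw [Real.dist_eq, dist_eq_norm, add_sub_cancel_left] at h
    rwa [Real.coe_toNNReal _ hL0] at h
  set K := tsupport V with hKdef
  have hKc : IsCompact K := hVsupp
  have hKm : MeasurableSet K := (isClosed_tsupport V).measurableSet
  have hKfin : volume K < ⊤ := hKc.measure_lt_top
  refine ⟨L^2 * (volume K).toReal, by positivity, fun z => ?_⟩
  have cVz : Continuous fun y : EuclideanSpace ℝ (Fin 2) => V (y + z) :=
    hV.continuous.comp (continuous_id.add continuous_const)
  have suppVz : HasCompactSupport fun y : EuclideanSpace ℝ (Fin 2) => V (y + z) :=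
    hVsupp.comp_homeomorph (Homeomorph.addRight z)
  have int1 : Integrable (fun y : EuclideanSpace ℝ (Fin 2) => V y * V (y + z)) :=
    (hV.continuous.mul cVz).integrable_of_hasCompactSupport (hVsupp.mul_right)
  have int2 : Integrable (fun y : EuclideanSpace ℝ (Fin 2) => V (y + z) * V (y + z)) :=
    (cVz.mul cVz).integrable_of_hasCompactSupport (suppVz.mul_right)
  have int3 : Integrable (fun y : EuclideanSpace ℝ (Fin 2) => V y * V y) :=
    (hV.continuous.mul hV.continuous).integrable_of_hasCompactSupport (hVsupp.mul_right)
  have expand : (fun y : EuclideanSpace ℝ (Fin 2) => (V (y + z) - V y)^2)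
      = fun y => (V (y + z) * V (y + z) - 2 * (V y * V (y + z))) + V y * V y := by
    funext y; ring
  have intsq : Integrable (fun y : EuclideanSpace ℝ (Fin 2) => (V (y + z) - V y)^2) := by
    rw [expand]; exact (int2.sub (int1.const_mul 2)).add int3
  have trans : ∫ y : EuclideanSpace ℝ (Fin 2), V (y + z) * V (y + z)
      = ∫ y : EuclideanSpace ℝ (Fin 2), V y * V y :=
    integral_add_right_eq_self (fun y => V y * V y) z
  have identity : ∫ y : EuclideanSpace ℝ (Fin 2), (V (y + z) - V y)^2
      = 2 * ((∫ y, V y * V y) - ∫ y, V y * V (y + z)) := by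
    have intA : Integrable (fun y : EuclideanSpace ℝ (Fin 2) =>
        V (y + z) * V (y + z) - 2 * (V y * V (y + z))) := int2.sub (int1.const_mul 2)
    rw [expand, integral_add intA int3, integral_sub int2 (int1.const_mul 2),
      MeasureTheory.integral_const_mul, trans]
    ring
  -- bound the integral of the square
  set S : Set (EuclideanSpace ℝ (Fin 2)) := K ∪ ((fun y => y + z) ⁻¹' K) with hSdef
  have hSm : MeasurableSet S :=
    hKm.union (hKm.preimage (measurable_id.add_const z))
  have hSfin : volume S < ⊤ := by
    refine lt_of_le_of_lt (measure_union_le _ _) ?_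
    rw [measure_preimage_add_right]
    exact ENNReal.add_lt_top.2 ⟨hKfin, hKfin⟩
  have hptw : ∀ y, (V (y + z) - V y)^2 ≤ S.indicator (fun _ => L^2 * ‖z‖^2) y := by
    intro y
    by_cases hy : y ∈ S
    · rw [indicator_of_mem hy]
      have h := hlipest y z
      have h2 : (V (y + z) - V y)^2 ≤ (L * ‖z‖)^2 := by
        rw [← sq_abs]
        exact pow_le_pow_left₀ (abs_nonneg _) h 2
      calc (V (y + z) - V y)^2 ≤ (L * ‖z‖)^2 := h2
        _ = L^2 * ‖z‖^2 := by ring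
    · rw [indicator_of_notMem hy]
      have hy1 : V y = 0 := image_eq_zero_of_notMem_tsupport (fun h => hy (Or.inl h))
      have hy2 : V (y + z) = 0 := image_eq_zero_of_notMem_tsupport (fun h => hy (Or.inr h))
      simp [hy1, hy2]
  have hindint : Integrable (S.indicator fun _ => L^2 * ‖z‖^2) := by
    rw [integrable_indicator_iff hSm]
    exact integrableOn_const hSfin.ne
  have hIle : ∫ y : EuclideanSpace ℝ (Fin 2), (V (y + z) - V y)^2
      ≤ L^2 * ‖z‖^2 * (volume S).toReal := by
    calc ∫ y : EuclideanSpace ℝ (Fin 2), (V (y + z) - V y)^2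
        ≤ ∫ y, S.indicator (fun _ => L^2 * ‖z‖^2) y := integral_mono intsq hindint hptw
      _ = L^2 * ‖z‖^2 * (volume S).toReal := by
          rw [integral_indicator_const _ hSm]; simp [mul_comm, measureReal_def]
  have hSle : (volume S).toReal ≤ 2 * (volume K).toReal := by
    have h2 : volume S ≤ volume K + volume K := by
      refine le_trans (measure_union_le _ _) ?_
      rw [measure_preimage_add_right]
    rw [show (2:ℝ) * (volume K).toReal = ((volume K + volume K)).toReal by
      rw [ENNReal.toReal_add hKfin.ne hKfin.ne]; ring]
    exact ENNReal.toReal_mono (by simp [hKfin.ne]) h2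
  have hInn : 0 ≤ ∫ y : EuclideanSpace ℝ (Fin 2), (V (y + z) - V y)^2 :=
    integral_nonneg fun y => sq_nonneg _
  rw [abs_sub_comm, abs_of_nonneg (by linarith [identity ▸ hInn] : 
    0 ≤ (∫ y, V y * V y) - ∫ y, V y * V (y + z))]
  have := hIle
  rw [identity] at this
  calc (∫ y, V y * V y) - ∫ y, V y * V (y + z)
      = (1/2) * ∫ y : EuclideanSpace ℝ (Fin 2), (V (y + z) - V y)^2 := by
        rw [identity]; ring
    _ ≤ (1/2) * (L^2 * ‖z‖^2 * (volume S).toReal) := by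
        apply mul_le_mul_of_nonneg_left hIle; norm_num
    _ ≤ (1/2) * (L^2 * ‖z‖^2 * (2 * (volume K).toReal)) := by
        apply mul_le_mul_of_nonneg_left _ (by norm_num)
        apply mul_le_mul_of_nonneg_left hSle (by positivity)
    _ = L^2 * (volume K).toReal * ‖z‖^2 := by ring

set_option maxHeartbeats 1000000 in
/-- Estimate of the term `I₂^{(2)}(t)` in the proof of the two-term
small-time heat trace asymptotics: with `W(z) = ∫ V(y) V(y+z) dy`, the Duhamel-type
integral against `W(z) - W(0)` is `O(t²)` on `(0,1]`. -/
theorem duhamel_second_order_remainder (B : ℝ) (hB : 0 < B)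
    (V : EuclideanSpace ℝ (Fin 2) → ℝ) (hV : ContDiff ℝ (⊤ : ℕ∞) V)
    (hVsupp : HasCompactSupport V) :
    ∃ C > 0, ∀ t ∈ Ioc (0 : ℝ) 1,
      |∫ s in Ioo (0 : ℝ) t,
          (s / (Real.sinh (B * s) * Real.sinh (B * (t - s)))) *
            ∫ z : EuclideanSpace ℝ (Fin 2),
              Real.exp (-(B / 4) * (Real.cosh (B * s) / Real.sinh (B * s)
                  + Real.cosh (B * (t - s)) / Real.sinh (B * (t - s))) * ‖z‖ ^ 2) *
                ((∫ y, V y * V (y + z)) - ∫ y, V y * V y)|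
        ≤ C * t ^ 2 := by
  obtain ⟨C0, hC0, hW⟩ := aux_W_bound V hV hVsupp
  have hE0 : 0 ≤ 64 * Real.pi * C0 / B ^ 2 := by
    apply div_nonneg _ (by positivity)
    have := Real.pi_pos
    nlinarith
  set D : ℝ := 64 * Real.pi * C0 / B ^ 2 + 1 with hD
  refine ⟨D, by rw [hD]; linarith, fun t ht => ?_⟩
  obtain ⟨ht0, ht1⟩ := ht
  -- pointwise bound on the outer integrand
  have key : ∀ s ∈ Ioo (0 : ℝ) t,
      |(s / (Real.sinh (B * s) * Real.sinh (B * (t - s)))) *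
          ∫ z : EuclideanSpace ℝ (Fin 2),
            Real.exp (-(B / 4) * (Real.cosh (B * s) / Real.sinh (B * s)
                + Real.cosh (B * (t - s)) / Real.sinh (B * (t - s))) * ‖z‖ ^ 2) *
              ((∫ y, V y * V (y + z)) - ∫ y, V y * V y)| ≤ D * t := by
    intro s hs
    obtain ⟨hs0, hst⟩ := hs
    have hts : 0 < t - s := by linarith
    have hBs : 0 < B * s := by positivity
    have hBts : 0 < B * (t - s) := by positivity
    have hsinh1 : 0 < Real.sinh (B * s) := Real.sinh_pos_iff.2 hBs
    have hsinh2 : 0 < Real.sinh (B * (t - s)) := Real.sinh_pos_iff.2 hBts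
    set a : ℝ := (B / 4) * (Real.cosh (B * s) / Real.sinh (B * s)
        + Real.cosh (B * (t - s)) / Real.sinh (B * (t - s))) with ha_def
    have hcoth1 : 1 / (B * s) ≤ Real.cosh (B * s) / Real.sinh (B * s) := by
      rw [div_le_div_iff₀ hBs hsinh1]
      have := aux_sinh_le hBs.le
      nlinarith
    have hcoth2 : 1 / (B * (t - s)) ≤ Real.cosh (B * (t - s)) / Real.sinh (B * (t - s)) := by
      rw [div_le_div_iff₀ hBts hsinh2]
      have := aux_sinh_le hBts.le
      nlinarith
    have ha_lb : t / (4 * (s * (t - s))) ≤ a := by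
      have heq : (B / 4) * (1 / (B * s) + 1 / (B * (t - s))) = t / (4 * (s * (t - s))) := by
        field_simp
        ring
      rw [← heq, ha_def]
      apply mul_le_mul_of_nonneg_left _ (by positivity)
      linarith
    have ha_pos : 0 < a := lt_of_lt_of_le (by positivity) ha_lb
    have hexp : ∀ z : EuclideanSpace ℝ (Fin 2),
        -(B / 4) * (Real.cosh (B * s) / Real.sinh (B * s)
          + Real.cosh (B * (t - s)) / Real.sinh (B * (t - s))) * ‖z‖ ^ 2
        = -a * ‖z‖ ^ 2 := by
      intro z; rw [ha_def]; ring
    -- inner integral bound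
    have hinner : |∫ z : EuclideanSpace ℝ (Fin 2),
        Real.exp (-(B / 4) * (Real.cosh (B * s) / Real.sinh (B * s)
            + Real.cosh (B * (t - s)) / Real.sinh (B * (t - s))) * ‖z‖ ^ 2) *
          ((∫ y, V y * V (y + z)) - ∫ y, V y * V y)|
        ≤ C0 * (4 * Real.pi / a ^ 2) := by
      have h1 : |∫ z : EuclideanSpace ℝ (Fin 2),
          Real.exp (-(B / 4) * (Real.cosh (B * s) / Real.sinh (B * s)
              + Real.cosh (B * (t - s)) / Real.sinh (B * (t - s))) * ‖z‖ ^ 2) *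
            ((∫ y, V y * V (y + z)) - ∫ y, V y * V y)|
          ≤ ∫ z : EuclideanSpace ℝ (Fin 2), C0 * (‖z‖ ^ 2 * Real.exp (-a * ‖z‖ ^ 2)) := by
        rw [← Real.norm_eq_abs]
        apply norm_integral_le_of_norm_le ((aux_moment_integrable ha_pos).const_mul C0)
        refine Filter.Eventually.of_forall fun z => ?_
        rw [Real.norm_eq_abs, abs_mul, abs_of_nonneg (Real.exp_nonneg _), hexp z]
        calc Real.exp (-a * ‖z‖ ^ 2) * |(∫ y, V y * V (y + z)) - ∫ y, V y * V y|
            ≤ Real.exp (-a * ‖z‖ ^ 2) * (C0 * ‖z‖ ^ 2) :=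
              mul_le_mul_of_nonneg_left (hW z) (Real.exp_nonneg _)
          _ = C0 * (‖z‖ ^ 2 * Real.exp (-a * ‖z‖ ^ 2)) := by ring
      refine h1.trans ?_
      rw [MeasureTheory.integral_const_mul]
      exact mul_le_mul_of_nonneg_left (aux_moment_le ha_pos) hC0
    -- convert 1/a² into s,t terms
    have hta : t ≤ 4 * (s * (t - s)) * a := by
      rw [div_le_iff₀ (by positivity)] at ha_lb
      linarith
    have hfrac : 4 * Real.pi / a ^ 2 ≤ 64 * Real.pi * (s * (t - s)) ^ 2 / t ^ 2 := by
      rw [div_le_div_iff₀ (by positivity) (by positivity)]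
      have ht2 : t ^ 2 ≤ 16 * (s * (t - s)) ^ 2 * a ^ 2 := by nlinarith
      nlinarith [Real.pi_pos]
    have hfac : s / (Real.sinh (B * s) * Real.sinh (B * (t - s)))
        ≤ 1 / (B ^ 2 * (t - s)) := by
      rw [div_le_div_iff₀ (by positivity) (by positivity)]
      have h1 : B * s ≤ Real.sinh (B * s) := Real.self_le_sinh_iff.2 hBs.le
      have h2 : B * (t - s) ≤ Real.sinh (B * (t - s)) := Real.self_le_sinh_iff.2 hBts.le
      nlinarith [mul_le_mul h1 h2 hBts.le hsinh1.le]
    have hfacpos : 0 ≤ s / (Real.sinh (B * s) * Real.sinh (B * (t - s))) := by positivity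
    rw [abs_mul, abs_of_nonneg hfacpos]
    refine le_trans (mul_le_mul hfac
      (hinner.trans (mul_le_mul_of_nonneg_left hfrac hC0)) (abs_nonneg _) (by positivity)) ?_
    have heq : (1 / (B ^ 2 * (t - s))) * (C0 * (64 * Real.pi * (s * (t - s)) ^ 2 / t ^ 2))
        = (64 * Real.pi * C0 / B ^ 2) * (s ^ 2 * (t - s) / t ^ 2) := by
      have hB0 : B ≠ 0 := ne_of_gt hB
      have hts0 : t - s ≠ 0 := ne_of_gt hts
      have ht0' : t ≠ 0 := ne_of_gt ht0
      field_simp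
    rw [heq, hD]
    have h3 : s ^ 2 * (t - s) / t ^ 2 ≤ t := by
      rw [div_le_iff₀ (by positivity)]
      have hs2 : s ^ 2 ≤ t ^ 2 := by nlinarith
      nlinarith [mul_le_mul hs2 (show t - s ≤ t by linarith) hts.le
        (by positivity : (0:ℝ) ≤ t ^ 2)]
    have h4 : (64 * Real.pi * C0 / B ^ 2) * (s ^ 2 * (t - s) / t ^ 2)
        ≤ (64 * Real.pi * C0 / B ^ 2) * t := mul_le_mul_of_nonneg_left h3 hE0
    have h5 : 0 ≤ s ^ 2 * (t - s) / t ^ 2 := by positivity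
    nlinarith
  -- conclude
  have hg : IntegrableOn (fun _ : ℝ => D * t) (Ioo (0 : ℝ) t) volume :=
    integrableOn_const measure_Ioo_lt_top.ne
  have hbound := MeasureTheory.norm_integral_le_of_norm_le hg
    (((ae_restrict_mem measurableSet_Ioo).mono) fun s hs => by
      rw [Real.norm_eq_abs]; exact key s hs)
  rw [Real.norm_eq_abs] at hbound
  refine hbound.trans ?_
  rw [MeasureTheory.setIntegral_const, Real.volume_real_Ioo_of_le ht0.le, smul_eq_mul]
  nlinarith
end

section
/- Let B > 0. There exists C > 0 such that for all t ∈ (0,1], | Σ_{n=1}^{∞} n^{−3/2} (1 − e^{−tB(2n+1)}) − 2√(2πBt) | ≤ C t. -/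
/-!
Put `a = 2Bt`. Since `1 - e^{-tB(2n+1)} = (1 - e^{-an}) + e^{-an} (1 - e^{-tB})`, the sum is
`∑ φ(n) + O(tB ∑ n^{-3/2})` for the profile `φ(x) = x^{-3/2} (1 - e^{-ax})`.
The profile is antitone on `(0, ∞)` (a product of `x^{-1/2}` and a secant slope of the convex
function `e^{-x}`), so the integral test pins `∑_{n ≥ 1} φ(n)` between `∫_1^∞ φ` and
`φ(1) + ∫_1^∞ φ`; together with `φ(x) ≤ a x^{-1/2}` this puts the sum within `2a` of `∫_0^∞ φ`.
Integrating by parts against `-2 x^{-1/2}` reduces `∫_0^∞ φ` to the Gamma integral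
`2a ∫_0^∞ x^{-1/2} e^{-ax} dx = 2 √(π a) = 2 √(2π B t)`.
-/

open MeasureTheory Set Filter Topology Real

theorem AntitoneOn.tsum_succ_sub_integral_Ioi_one_mem_Icc {f : ℝ → ℝ}
    (anti : AntitoneOn f (Ici 1)) (integrable : IntegrableOn f (Ioi 1))
    (nonneg : ∀ x ∈ Ioi 1, 0 ≤ f x) :
    ∑' n : ℕ, f ((n + 1 : ℕ) : ℝ) - ∫ x in Ioi 1, f x ∈ Icc 0 (f 1) := by
  have anti' : AntitoneOn f (Ici ((1 : ℕ) : ℝ)) := by rwa [Nat.cast_one]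
  have integrable' : IntegrableOn f (Ioi ((1 : ℕ) : ℝ)) := by rwa [Nat.cast_one]
  have nonneg' : ∀ x ∈ Ioi ((1 : ℕ) : ℝ), 0 ≤ f x := by rwa [Nat.cast_one]
  have hsum := anti'.summable_of_integrableOn_Ioi integrable' nonneg'
  have hlower := anti'.integral_le_tsum_comp_add 1 hsum nonneg'
  have hupper := anti'.tsum_comp_add_le_integral 1 integrable' nonneg'
  have hsplit := ((summable_nat_add_iff 1).2 hsum).tsum_eq_zero_add
  push_cast at hlower hupper hsplit ⊢
  constructor <;> linarith

namespace LandauSum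

lemma rpow_neg_three_halves_mul_self {x : ℝ} (hx : 0 ≤ x) :
    x ^ (-(3:ℝ)/2) * x = x ^ (-(1:ℝ)/2) := by
  rw [← rpow_add_one' hx (by norm_num)]; norm_num

lemma rpow_neg_one_half_mul_self {x : ℝ} (hx : 0 ≤ x) :
    x ^ (-(1:ℝ)/2) * x = x ^ ((1:ℝ)/2) := by
  rw [← rpow_add_one' hx (by norm_num)]; norm_num

lemma one_sub_exp_neg_nonneg {u : ℝ} (hu : 0 ≤ u) : 0 ≤ 1 - exp (-u) := by
  simpa using exp_le_one_iff.2 (neg_nonpos.2 hu)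

lemma one_sub_exp_neg_le (u : ℝ) : 1 - exp (-u) ≤ u := by
  linarith [add_one_le_exp (-u)]

lemma antitoneOn_one_sub_exp_neg_div : AntitoneOn (fun u => (1 - exp (-u)) / u) (Ioi 0) := by
  intro u (hu : 0 < u) v (hv : 0 < v) huv
  have := convexOn_exp.secant_mono (mem_univ 0) (mem_univ (-v)) (mem_univ (-u))
    (by linarith) (by linarith) (by linarith)
  rwa [exp_zero, sub_zero, sub_zero, div_neg, div_neg, ← neg_div, ← neg_div, neg_sub, neg_sub]
    at this

lemma integrableOn_mul_rpow_neg_one_half_Ioc (a : ℝ) :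
    IntegrableOn (fun x : ℝ => a * x ^ (-(1:ℝ)/2)) (Ioc 0 1) :=
  ((intervalIntegral.intervalIntegrable_rpow' (by norm_num)).1).const_mul a

noncomputable def profile (a x : ℝ) : ℝ := x ^ (-(3:ℝ)/2) * (1 - exp (-(a * x)))

variable {a : ℝ}

lemma profile_nonneg (ha : 0 ≤ a) {x : ℝ} (hx : 0 ≤ x) : 0 ≤ profile a x :=
  mul_nonneg (rpow_nonneg hx _) (one_sub_exp_neg_nonneg (by positivity))

lemma profile_le_rpow (a : ℝ) {x : ℝ} (hx : 0 ≤ x) : profile a x ≤ x ^ (-(3:ℝ)/2) :=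
  mul_le_of_le_one_right (rpow_nonneg hx _) (by linarith [exp_pos (-(a * x))])

lemma profile_le_mul_rpow (a : ℝ) {x : ℝ} (hx : 0 ≤ x) : profile a x ≤ a * x ^ (-(1:ℝ)/2) :=
  calc profile a x ≤ x ^ (-(3:ℝ)/2) * (a * x) :=
        mul_le_mul_of_nonneg_left (one_sub_exp_neg_le _) (rpow_nonneg hx _)
    _ = a * x ^ (-(1:ℝ)/2) := by rw [← rpow_neg_three_halves_mul_self hx]; ring

lemma profile_eq_mul_div (ha : 0 < a) {x : ℝ} (hx : 0 < x) :
    profile a x = a * x ^ (-(1:ℝ)/2) * ((1 - exp (-(a * x))) / (a * x)) := by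
  rw [profile, ← rpow_neg_three_halves_mul_self hx.le]
  field_simp

lemma antitoneOn_profile (ha : 0 < a) : AntitoneOn (profile a) (Ioi 0) := by
  intro x (hx : 0 < x) y (hy : 0 < y) hxy
  rw [profile_eq_mul_div ha hx, profile_eq_mul_div ha hy]
  exact mul_le_mul
    (mul_le_mul_of_nonneg_left (rpow_le_rpow_of_nonpos hx hxy (by norm_num)) ha.le)
    (antitoneOn_one_sub_exp_neg_div (show 0 < a * x by positivity)
      (show 0 < a * y by positivity) (by gcongr))
    (div_nonneg (one_sub_exp_neg_nonneg (by positivity)) (by positivity)) (by positivity)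

lemma continuousOn_profile (a : ℝ) : ContinuousOn (profile a) (Ioi 0) := fun x hx =>
  ((continuousAt_rpow_const x _ (Or.inl (ne_of_gt hx))).mul (by fun_prop)).continuousWithinAt

lemma integrableOn_profile_Ioc (ha : 0 ≤ a) : IntegrableOn (profile a) (Ioc 0 1) := by
  refine (integrableOn_mul_rpow_neg_one_half_Ioc a).mono'
    ((continuousOn_profile a).mono Ioc_subset_Ioi_self
      |>.aestronglyMeasurable measurableSet_Ioc) ?_
  filter_upwards [ae_restrict_mem measurableSet_Ioc] with x hx
  rw [norm_of_nonneg (profile_nonneg ha hx.1.le)]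
  exact profile_le_mul_rpow a hx.1.le

lemma integrableOn_profile_Ioi_one (ha : 0 ≤ a) : IntegrableOn (profile a) (Ioi 1) := by
  refine (integrableOn_Ioi_rpow_of_lt (by norm_num : -(3:ℝ)/2 < -1) one_pos).mono'
    ((continuousOn_profile a).mono (Ioi_subset_Ioi zero_le_one)
      |>.aestronglyMeasurable measurableSet_Ioi) ?_
  filter_upwards [ae_restrict_mem measurableSet_Ioi] with x (hx : 1 < x)
  rw [norm_of_nonneg (profile_nonneg ha (by linarith))]
  exact profile_le_rpow a (by linarith)

lemma integrableOn_profile (ha : 0 ≤ a) : IntegrableOn (profile a) (Ioi 0) := by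
  rw [← Ioc_union_Ioi_eq_Ioi zero_le_one]
  exact (integrableOn_profile_Ioc ha).union (integrableOn_profile_Ioi_one ha)

lemma setIntegral_profile_Ioc_le (ha : 0 ≤ a) : ∫ x in Ioc 0 1, profile a x ≤ 2 * a := by
  calc ∫ x in Ioc 0 1, profile a x ≤ ∫ x in Ioc 0 1, a * x ^ (-(1:ℝ)/2) :=
        setIntegral_mono_on (integrableOn_profile_Ioc ha) (integrableOn_mul_rpow_neg_one_half_Ioc a)
          measurableSet_Ioc
          fun x hx => profile_le_mul_rpow a hx.1.le
    _ = 2 * a := by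
        rw [integral_const_mul, ← intervalIntegral.integral_of_le zero_le_one,
          integral_rpow (Or.inl (by norm_num))]
        norm_num
        ring

noncomputable def profilePrimitive (a x : ℝ) : ℝ := -2 * x ^ (-(1:ℝ)/2) * (1 - exp (-(a * x)))

lemma hasDerivAt_profilePrimitive {x : ℝ} (hx : 0 < x) :
    HasDerivAt (profilePrimitive a)
      (profile a x - 2 * a * (x ^ (-(1:ℝ)/2) * exp (-(a * x)))) x := by
  have hpow := ((hasDerivAt_rpow_const (p := -(1:ℝ)/2) (Or.inl hx.ne')).const_mul (-2))
  have hexp := ((hasDerivAt_id x).const_mul a).neg.exp.const_sub 1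
  refine (hpow.mul hexp).congr_deriv ?_
  rw [profile, show -(1:ℝ)/2 - 1 = -(3:ℝ)/2 by norm_num]
  simp only [Pi.neg_apply, id]
  ring

lemma profilePrimitive_zero (a : ℝ) : profilePrimitive a 0 = 0 := by
  simp [profilePrimitive]

lemma abs_profilePrimitive_le (ha : 0 ≤ a) {x : ℝ} (hx : 0 ≤ x) :
    |profilePrimitive a x| ≤ 2 * a * x ^ ((1:ℝ)/2) := by
  rw [profilePrimitive, abs_mul, abs_mul, abs_of_nonneg (rpow_nonneg hx _),
    abs_of_nonneg (one_sub_exp_neg_nonneg (by positivity))]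
  calc |(-2 : ℝ)| * x ^ (-(1:ℝ)/2) * (1 - exp (-(a * x)))
      ≤ 2 * x ^ (-(1:ℝ)/2) * (a * x) := by norm_num; gcongr; exact one_sub_exp_neg_le _
    _ = 2 * a * x ^ ((1:ℝ)/2) := by rw [← rpow_neg_one_half_mul_self hx]; ring

lemma continuousWithinAt_profilePrimitive (ha : 0 ≤ a) :
    ContinuousWithinAt (profilePrimitive a) (Ici 0) 0 := by
  have hbound : Tendsto (fun x : ℝ => 2 * a * x ^ ((1:ℝ)/2)) (𝓝[Ici 0] 0) (𝓝 0) := by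
    have := ((continuous_rpow_const (by norm_num : (0:ℝ) ≤ 1/2)).tendsto 0).const_mul (2 * a)
    rw [zero_rpow (by norm_num), mul_zero] at this
    exact this.mono_left nhdsWithin_le_nhds
  rw [ContinuousWithinAt, profilePrimitive_zero]
  exact squeeze_zero_norm'
    (eventually_nhdsWithin_of_forall fun x hx => abs_profilePrimitive_le ha hx) hbound

lemma tendsto_profilePrimitive_atTop (ha : 0 < a) :
    Tendsto (profilePrimitive a) atTop (𝓝 0) := by
  have hpow : Tendsto (fun x : ℝ => x ^ (-(1:ℝ)/2)) atTop (𝓝 0) := by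
    simpa [neg_div] using tendsto_rpow_neg_atTop (by norm_num : (0:ℝ) < 1/2)
  have hexp : Tendsto (fun x => exp (-(a * x))) atTop (𝓝 0) :=
    tendsto_exp_neg_atTop_nhds_zero.comp (tendsto_id.const_mul_atTop ha)
  unfold profilePrimitive
  simpa only [mul_zero, zero_mul, sub_zero] using (hpow.const_mul (-2)).mul (hexp.const_sub 1)

lemma integral_profile (ha : 0 < a) : ∫ x in Ioi 0, profile a x = 2 * √(π * a) := by
  have hg : IntegrableOn (fun x : ℝ => x ^ (-(1:ℝ)/2) * exp (-(a * x))) (Ioi 0) := by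
    simpa [neg_mul] using
      integrableOn_rpow_mul_exp_neg_mul_rpow (s := -(1:ℝ)/2) (by norm_num) one_pos ha
  have hg_eq : ∫ x in Ioi 0, x ^ (-(1:ℝ)/2) * exp (-(a * x)) = √π / √a := by
    have := integral_rpow_mul_exp_neg_mul_Ioi (a := 1/2) (by norm_num) ha
    rw [show (1:ℝ)/2 - 1 = -(1:ℝ)/2 by norm_num, Gamma_one_half_eq, ← sqrt_eq_rpow] at this
    rw [this, sqrt_div' _ ha.le, sqrt_one, div_mul_eq_mul_div, one_mul]
  have key := integral_Ioi_of_hasDerivAt_of_tendsto (continuousWithinAt_profilePrimitive ha.le)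
    (fun x hx => hasDerivAt_profilePrimitive hx) ((integrableOn_profile ha.le).sub
      (hg.const_mul (2 * a))) (tendsto_profilePrimitive_atTop ha)
  rw [integral_sub (integrableOn_profile ha.le) (hg.const_mul _), integral_const_mul, hg_eq]
    at key
  rw [profilePrimitive_zero, sub_zero, sub_eq_zero] at key
  rw [key, sqrt_mul pi_nonneg]
  nth_rw 1 [← mul_self_sqrt ha.le]
  field_simp

lemma abs_tsum_profile_sub_integral_le (ha : 0 < a) :
    |∑' n : ℕ, profile a ((n + 1 : ℕ) : ℝ) - ∫ x in Ioi 0, profile a x| ≤ 2 * a := by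
  have htest := ((antitoneOn_profile ha).mono (Ici_subset_Ioi.2 one_pos))
    |>.tsum_succ_sub_integral_Ioi_one_mem_Icc (integrableOn_profile_Ioi_one ha.le)
      fun x (hx : 1 < x) => profile_nonneg ha.le (by linarith)
  have hfirst : profile a 1 ≤ a := by simpa using profile_le_mul_rpow a zero_le_one
  have hJ_nonneg : 0 ≤ ∫ x in Ioc 0 1, profile a x :=
    setIntegral_nonneg measurableSet_Ioc fun x hx => profile_nonneg ha.le hx.1.le
  have hJ_le := setIntegral_profile_Ioc_le ha.le
  rw [← Ioc_union_Ioi_eq_Ioi zero_le_one, setIntegral_union (Ioc_disjoint_Ioi le_rfl)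
    measurableSet_Ioi (integrableOn_profile_Ioc ha.le) (integrableOn_profile_Ioi_one ha.le)]
  rw [abs_le]
  constructor <;> linarith [htest.1, htest.2]

lemma sub_profile_mem_Icc {b x : ℝ} (ha : 0 ≤ a) (hb : 0 ≤ b) (hx : 0 ≤ x) :
    x ^ (-(3:ℝ)/2) * (1 - exp (-(a * x + b))) - profile a x ∈ Icc 0 (b * x ^ (-(3:ℝ)/2)) := by
  have hexp : exp (-(a * x)) ≤ 1 := exp_le_one_iff.2 (neg_nonpos.2 (by positivity))
  rw [profile, neg_add, exp_add, ← mul_sub, sub_sub_sub_cancel_left, ← mul_one_sub]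
  have hb' : 0 ≤ 1 - exp (-b) := one_sub_exp_neg_nonneg hb
  refine ⟨by positivity, ?_⟩
  calc x ^ (-(3:ℝ)/2) * (exp (-(a * x)) * (1 - exp (-b)))
      ≤ x ^ (-(3:ℝ)/2) * (1 * b) := by gcongr; exact one_sub_exp_neg_le b
    _ = b * x ^ (-(3:ℝ)/2) := by ring

lemma abs_tsum_sub_tsum_profile_le {b : ℝ} (ha : 0 ≤ a) (hb : 0 ≤ b) :
    |∑' n : ℕ, ((n + 1 : ℕ) : ℝ) ^ (-(3:ℝ)/2) * (1 - exp (-(a * ((n + 1 : ℕ) : ℝ) + b))) -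
      ∑' n : ℕ, profile a ((n + 1 : ℕ) : ℝ)| ≤ b * ∑' n : ℕ, ((n + 1 : ℕ) : ℝ) ^ (-(3:ℝ)/2) := by
  have hζ : Summable fun n : ℕ => ((n + 1 : ℕ) : ℝ) ^ (-(3:ℝ)/2) :=
    (summable_nat_add_iff 1).2 (summable_nat_rpow.2 (by norm_num))
  have hprofile : Summable fun n : ℕ => profile a ((n + 1 : ℕ) : ℝ) :=
    hζ.of_nonneg_of_le (fun n => profile_nonneg ha (Nat.cast_nonneg _))
      (fun n => profile_le_rpow a (Nat.cast_nonneg _))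
  have hdiff (n : ℕ) := sub_profile_mem_Icc ha hb (x := ((n + 1 : ℕ) : ℝ)) (Nat.cast_nonneg _)
  have hdiff_summable := hζ.mul_left b |>.of_nonneg_of_le (fun n => (hdiff n).1)
    (fun n => (hdiff n).2)
  have hfirst := (hdiff_summable.add hprofile).congr fun n => sub_add_cancel _ _
  rw [← hfirst.tsum_sub hprofile,
    abs_of_nonneg (tsum_nonneg fun n => (hdiff n).1), ← tsum_mul_left]
  exact hdiff_summable.tsum_le_tsum (fun n => (hdiff n).2) (hζ.mul_left b)

end LandauSum

open LandauSum in
/-- `∑_{n=1}^∞ n^{-3/2} (1 - e^{-tB(2n+1)}) = 2√(2πBt) + O(t)` for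
`t ∈ (0,1]`. The sum over `n ≥ 1` is written as a sum over `n : ℕ` of terms with
index `n + 1`. -/
theorem landau_sum_three_halves (B : ℝ) (hB : 0 < B) :
    ∃ C > 0, ∀ t ∈ Ioc (0 : ℝ) 1,
      |(∑' n : ℕ, ((n + 1 : ℕ) : ℝ) ^ (-(3 : ℝ) / 2) *
          (1 - Real.exp (-t * (B * (2 * (n + 1) + 1))))) -
        2 * Real.sqrt (2 * Real.pi * B * t)| ≤ C * t := by
  refine ⟨B * (∑' n : ℕ, ((n + 1 : ℕ) : ℝ) ^ (-(3:ℝ)/2) + 4), by positivity, ?_⟩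
  rintro t ⟨ht, -⟩
  have hexponent (n : ℕ) : -t * (B * (2 * ((n : ℝ) + 1) + 1)) =
      -(2 * B * t * ((n + 1 : ℕ) : ℝ) + B * t) := by
    push_cast; ring
  have hshift := abs_tsum_sub_tsum_profile_le (a := 2 * B * t) (b := B * t) (by positivity)
    (by positivity)
  have hcompare := abs_tsum_profile_sub_integral_le (a := 2 * B * t) (by positivity)
  rw [integral_profile (by positivity)] at hcompare
  simp_rw [hexponent, show 2 * π * B * t = π * (2 * B * t) by ring]
  calc _ ≤ _ := abs_sub_le _ _ _
    _ ≤ _ := add_le_add hshift hcompare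
    _ = _ := by ring
end
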